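/- arXiv:2102.02029 — 5 statements merged into one kernel-verified Lean document; each statement's English description precedes it below -/
import Mathlib

section
/- Let t ≥ 1 and let x_t ∈ K, η_t ∈ [0,1]. Let v_t ∈ argmin_{v∈V} ( vᵀ∇f(x_t) + (βη_t/2)‖x_t − v‖² ), and let x_{t+1} ∈ K satisfy f(x_{t+1}) ≤ f((1−η_t)x_t + η_t v_t). Then f(x_{t+1}) − f* ≤ (1−η_t)(f(x_t) − f*) + (βη_t²/2)( dist(x_t, X*)² + (D*)² ). -/
/-!
By β-smoothness, `f` at the new iterate is at most `f(x_t) + η⟪∇f(x_t), v_t - x_t⟫ + βη²/2 ‖x_t - v_t‖²`,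
so it suffices to bound the oracle value `⟪∇f(x_t), v⟫ + c ‖x_t - v‖²` (`c = βη/2`) at `v_t`.
Fix a minimiser `p ∈ X* ⊆ conv S*`. Expanding `‖x_t - v‖²` around `p`, the oracle objective is an
affine function of `v` plus `c ‖p - v‖² ≤ c D*²` on `S*`; so the minimum over `V ⊇ S*`, less `c D*²`,
lies below that affine function on `S*`, hence also at `p ∈ conv S*`. Convexity,
`⟪∇f(x_t), p - x_t⟫ ≤ f* - f(x_t)`, finishes the bound with `‖x_t - p‖²`, and taking the infimum
over `p ∈ X*` gives `dist(x_t, X*)²`.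
-/

open scoped RealInnerProductSpace
open Metric Set AffineMap

section Calculus

variable {E : Type*} [NormedAddCommGroup E] [InnerProductSpace ℝ E] [CompleteSpace E]
  {f : E → ℝ}

theorem HasGradientAt.hasDerivAt_comp_lineMap {f' x y : E} {t : ℝ}
    (h : HasGradientAt f f' (lineMap x y t)) :
    HasDerivAt (fun s ↦ f (lineMap x y s)) ⟪f', y - x⟫ t :=
  (h.hasFDerivAt.comp_hasDerivAt t hasDerivAt_lineMap).congr_deriv
    (InnerProductSpace.toDual_apply_apply ..)

theorem ConvexOn.add_inner_sub_le_of_hasGradientAt {f' x : E} (hf : ConvexOn ℝ univ f)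
    (hx : HasGradientAt f f' x) (y : E) : f x + ⟪f', y - x⟫ ≤ f y := by
  have hline : ConvexOn ℝ univ (fun s ↦ f (lineMap x y s)) := hf.comp_affineMap (lineMap x y)
  have hderiv := hline.le_slope_of_hasDerivAt (mem_univ 0) (mem_univ 1) zero_lt_one
    (HasGradientAt.hasDerivAt_comp_lineMap (by rwa [lineMap_apply_zero]))
  simp only [slope_def_field, lineMap_apply_zero, lineMap_apply_one, sub_zero, div_one] at hderiv
  linarith

theorem le_add_inner_sub_add_sq_of_lipschitz_gradient {g : E → E} {β : ℝ}
    (hg : ∀ x, HasGradientAt f (g x) x) (hg_lip : ∀ x y, ‖g x - g y‖ ≤ β * ‖x - y‖) (x y : E) :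
    f y ≤ f x + ⟪g x, y - x⟫ + β / 2 * ‖y - x‖ ^ 2 := by
  let ψ : ℝ → ℝ := fun t ↦ f (lineMap x y t) - t * ⟪g x, y - x⟫ - β / 2 * t ^ 2 * ‖y - x‖ ^ 2
  have hψ : ∀ t, HasDerivAt ψ
      (⟪g (lineMap x y t), y - x⟫ - ⟪g x, y - x⟫ - β * t * ‖y - x‖ ^ 2) t := fun t ↦ by
    refine (((hg _).hasDerivAt_comp_lineMap.sub ((hasDerivAt_id t).mul_const _)).sub
      (((hasDerivAt_pow 2 t).const_mul (β / 2)).mul_const _)).congr_deriv ?_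
    ring
  have hanti : AntitoneOn ψ (Icc 0 1) := by
    refine antitoneOn_of_hasDerivWithinAt_nonpos (convex_Icc 0 1)
      (fun t _ ↦ (hψ t).continuousAt.continuousWithinAt) (fun t _ ↦ (hψ t).hasDerivWithinAt) ?_
    rintro t ht
    rw [interior_Icc] at ht
    have hgap : ‖g (lineMap x y t) - g x‖ ≤ β * t * ‖y - x‖ := by
      simpa [← vsub_eq_sub, lineMap_vsub_left, norm_smul, abs_of_pos ht.1, mul_assoc]
        using hg_lip (lineMap x y t) x
    have hcs := real_inner_le_norm (g (lineMap x y t) - g x) (y - x)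
    rw [inner_sub_left] at hcs
    linarith [mul_le_mul_of_nonneg_right hgap (norm_nonneg (y - x))]
  have := hanti (left_mem_Icc.2 zero_le_one) (right_mem_Icc.2 zero_le_one) zero_le_one
  simp only [ψ, lineMap_apply_zero, lineMap_apply_one] at this
  linarith

end Calculus

section ConvexHull

variable {E : Type*} [NormedAddCommGroup E] [InnerProductSpace ℝ E] {s : Set E} {p : E}

theorem le_inner_of_mem_convexHull (hp : p ∈ convexHull ℝ s) {u : E} {k : ℝ}
    (h : ∀ v ∈ s, k ≤ ⟪u, v⟫) : k ≤ ⟪u, p⟫ :=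
  convexHull_min h (convex_halfSpace_ge (innerₛₗ ℝ u).isLinear k) hp

theorem norm_sub_le_of_mem_convexHull (hp : p ∈ convexHull ℝ s) {v : E} {D : ℝ}
    (hD : ∀ u ∈ s, ‖u - v‖ ≤ D) : ‖p - v‖ ≤ D := by
  obtain ⟨u, hu, hpu⟩ := convexHull_exists_dist_ge hp v
  rw [dist_eq_norm, dist_eq_norm] at hpu
  exact hpu.trans (hD u hu)

theorem le_inner_add_mul_sq_of_mem_convexHull (hp : p ∈ convexHull ℝ s) {D c m : ℝ} {a x : E}
    (hD : ∀ u ∈ s, ∀ v ∈ s, ‖u - v‖ ≤ D) (hc : 0 ≤ c)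
    (hm : ∀ v ∈ s, m ≤ ⟪a, v⟫ + c * ‖x - v‖ ^ 2) :
    m ≤ ⟪a, p⟫ + c * (‖x - p‖ ^ 2 + D ^ 2) := by
  have hexpand : ∀ v, ‖x - v‖ ^ 2 = ‖x - p‖ ^ 2 + 2 * ⟪x - p, p⟫ - 2 * ⟪x - p, v⟫ + ‖p - v‖ ^ 2 :=
    fun v ↦ by rw [← sub_add_sub_cancel x p v, norm_add_sq_real, inner_sub_right]; ring_nf
  have hclose : ∀ v ∈ s, ‖p - v‖ ^ 2 ≤ D ^ 2 := fun v hv ↦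
    pow_le_pow_left₀ (norm_nonneg _)
      (norm_sub_le_of_mem_convexHull hp fun u hu ↦ hD u hu v hv) 2
  have haffine := le_inner_of_mem_convexHull hp (u := a - (2 * c) • (x - p))
    (k := m - c * (‖x - p‖ ^ 2 + 2 * ⟪x - p, p⟫ + D ^ 2)) fun v hv ↦ by
      have hmv := hm v hv
      rw [hexpand] at hmv
      rw [inner_sub_left a, real_inner_smul_left]
      linarith [mul_le_mul_of_nonneg_left (hclose v hv) hc]
  rw [inner_sub_left a, real_inner_smul_left] at haffine
  linarith

end ConvexHull

theorem le_mul_infDist_sq_of_forall_le {X : Type*} [PseudoMetricSpace X] {s : Set X} {x : X}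
    {a c : ℝ} (hs : s.Nonempty) (ha : 0 ≤ a) (h : ∀ p ∈ s, c ≤ a * dist x p ^ 2) :
    c ≤ a * infDist x s ^ 2 := by
  rcases le_or_gt c 0 with hc | hc
  · exact hc.trans (by positivity)
  obtain ⟨p, hp⟩ := hs
  have ha : 0 < a := lt_of_le_of_ne ha fun h0 ↦ by simpa [← h0, hc.not_ge] using h p hp
  rw [← div_le_iff₀' ha, ← Real.sqrt_le_left infDist_nonneg, le_infDist ⟨p, hp⟩]
  exact fun q hq ↦ (Real.sqrt_le_left dist_nonneg).2 ((div_le_iff₀' ha).2 (h q hq))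

theorem fw_nep_one_step_improvement_general {d : ℕ}
    (K : Set (EuclideanSpace ℝ (Fin d)))
    (V : Set (EuclideanSpace ℝ (Fin d)))
    (f : EuclideanSpace ℝ (Fin d) → ℝ)
    (g : EuclideanSpace ℝ (Fin d) → EuclideanSpace ℝ (Fin d))
    (hfconv : ConvexOn ℝ Set.univ f)
    (hgrad : ∀ x, HasGradientAt f (g x) x)
    (β : ℝ) (hβ : 0 < β)
    (hsmooth : ∀ x y, ‖g x - g y‖ ≤ β * ‖x - y‖)
    (fstar : ℝ)
    (Xstar : Set (EuclideanSpace ℝ (Fin d)))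
    (hXstar : Xstar = {x ∈ K | f x = fstar}) (hXne : Xstar.Nonempty)
    (Sstar : Set (EuclideanSpace ℝ (Fin d))) (hSV : Sstar ⊆ V)
    (hSconv : Xstar ⊆ convexHull ℝ Sstar)
    (Dstar : ℝ) (hDstar : ∀ u ∈ Sstar, ∀ v ∈ Sstar, ‖u - v‖ ≤ Dstar)
    (xt : EuclideanSpace ℝ (Fin d))
    (η : ℝ) (hη : η ∈ Set.Icc (0:ℝ) 1)
    (vt : EuclideanSpace ℝ (Fin d))
    (hvt : ∀ v ∈ V, ⟪g xt, vt⟫ + β * η / 2 * ‖xt - vt‖ ^ 2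
        ≤ ⟪g xt, v⟫ + β * η / 2 * ‖xt - v‖ ^ 2)
    (xnext : EuclideanSpace ℝ (Fin d))
    (hxnext : f xnext ≤ f ((1 - η) • xt + η • vt)) :
    f xnext - fstar ≤ (1 - η) * (f xt - fstar)
      + β * η ^ 2 / 2 * (infDist xt Xstar ^ 2 + Dstar ^ 2) := by
  have hη0 : 0 ≤ η := hη.1
  have hstep : (1 - η) • xt + η • vt - xt = η • (vt - xt) := by module
  have hdescent := le_add_inner_sub_add_sq_of_lipschitz_gradient hgrad hsmooth xt
    ((1 - η) • xt + η • vt)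
  rw [hstep, real_inner_smul_right, inner_sub_right, norm_smul, mul_pow, Real.norm_eq_abs,
    sq_abs, norm_sub_rev vt] at hdescent
  suffices ∀ p ∈ Xstar, f xnext - fstar - (1 - η) * (f xt - fstar) - β * η ^ 2 / 2 * Dstar ^ 2
      ≤ β * η ^ 2 / 2 * dist xt p ^ 2 by
    have := le_mul_infDist_sq_of_forall_le hXne (by positivity) this
    linarith
  intro p hp
  have hfp : f p = fstar := (hXstar ▸ hp).2
  have horacle := le_inner_add_mul_sq_of_mem_convexHull (hSconv hp) hDstar (by positivity)
    fun v hv ↦ hvt v (hSV hv)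
  have hgradient := hfconv.add_inner_sub_le_of_hasGradientAt (hgrad xt) p
  rw [inner_sub_right, hfp] at hgradient
  rw [dist_eq_norm]
  linarith [mul_le_mul_of_nonneg_left horacle hη0, mul_le_mul_of_nonneg_left hgradient hη0]

/-- one-step error reduction for the Frank-Wolfe variant with a
nearest extreme point oracle (Lemma 1 of the paper). -/
theorem fw_nep_one_step_improvement {d : ℕ}
    (K : Set (EuclideanSpace ℝ (Fin d)))
    (hKconv : Convex ℝ K) (hKcomp : IsCompact K)
    (V : Set (EuclideanSpace ℝ (Fin d))) (hV : V = K.extremePoints ℝ)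
    (f : EuclideanSpace ℝ (Fin d) → ℝ)
    (g : EuclideanSpace ℝ (Fin d) → EuclideanSpace ℝ (Fin d))
    (hfconv : ConvexOn ℝ Set.univ f)
    (hgrad : ∀ x, HasGradientAt f (g x) x)
    (β : ℝ) (hβ : 0 < β)
    (hsmooth : ∀ x y, ‖g x - g y‖ ≤ β * ‖x - y‖)
    (fstar : ℝ) (hfstar : ∀ x ∈ K, fstar ≤ f x)
    (Xstar : Set (EuclideanSpace ℝ (Fin d)))
    (hXstar : Xstar = {x ∈ K | f x = fstar}) (hXne : Xstar.Nonempty)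
    (Sstar : Set (EuclideanSpace ℝ (Fin d))) (hSV : Sstar ⊆ V)
    (hSconv : Xstar ⊆ convexHull ℝ Sstar)
    (Dstar : ℝ) (hDstar : ∀ u ∈ Sstar, ∀ v ∈ Sstar, ‖u - v‖ ≤ Dstar)
    (xt : EuclideanSpace ℝ (Fin d)) (hxt : xt ∈ K)
    (η : ℝ) (hη : η ∈ Set.Icc (0:ℝ) 1)
    (vt : EuclideanSpace ℝ (Fin d)) (hvtV : vt ∈ V)
    (hvt : ∀ v ∈ V, ⟪g xt, vt⟫ + β * η / 2 * ‖xt - vt‖ ^ 2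
        ≤ ⟪g xt, v⟫ + β * η / 2 * ‖xt - v‖ ^ 2)
    (xnext : EuclideanSpace ℝ (Fin d)) (hxnextK : xnext ∈ K)
    (hxnext : f xnext ≤ f ((1 - η) • xt + η • vt)) :
    f xnext - fstar ≤ (1 - η) * (f xt - fstar)
      + β * η ^ 2 / 2 * (infDist xt Xstar ^ 2 + Dstar ^ 2) :=
  fw_nep_one_step_improvement_general K V f g hfconv hgrad β hβ hsmooth fstar Xstar hXstar hXne
    Sstar hSV hSconv Dstar hDstar xt η hη vt hvt xnext hxnext
end

section
/- Let d, m be positive integers with m < d, let k = ⌊√(d−m−1)⌋, and let S_1, …, S_k be pairwise disjoint subsets of the coordinate set {m+2, …, d}, each of cardinality k. Let x* = (1/2)·∑_{i=1}^m e_i ∈ ℝ^d, let x_1 = e_{m+1}, and let v_1, …, v_k ∈ [0,1]^d be any vectors such that for every i ∈ {1,…,k} and every coordinate j ∈ {m+1, …, d}: v_i(j) = 1 if j ∈ S_i and v_i(j) = 0 otherwise. Then for every x ∈ conv({x_1, v_1, …, v_k}): (1/2)‖x − x*‖² ≥ 1/4. -/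
/-!
Put `U = S₁ ∪ ⋯ ∪ S_k` and `w = e_{m+1} + k⁻¹ • 𝟙_U`. Since `w` only sees coordinates on which `x₁`
and the `vᵢ` are prescribed, `⟪w, x₁⟫ = ⟪w, vᵢ⟫ = 1`, hence `⟪w, x⟫ = 1` on the whole convex hull.
As `x*` vanishes there, `⟪w, x - x*⟫ = 1`, while disjointness gives `|U| = k²` and
`‖w‖² = 1 + k⁻² k² ≤ 2`. Cauchy–Schwarz then yields `1 ≤ ‖w‖² ‖x - x*‖² ≤ 2 ‖x - x*‖²`.
-/

open Finset Function EuclideanSpace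

section InnerProductSpace

variable {E : Type*} [NormedAddCommGroup E] [InnerProductSpace ℝ E]

theorem inner_eq_of_mem_convexHull {s : Set E} {w : E} {c : ℝ} (h : ∀ y ∈ s, inner ℝ w y = c)
    {x : E} (hx : x ∈ convexHull ℝ s) : inner ℝ w x = c :=
  convexHull_min h (convex_hyperplane (innerₛₗ ℝ w).isLinear c) hx

theorem one_le_norm_sq_mul_norm_sq_of_inner_eq_one {w y : E} (h : inner ℝ w y = 1) :
    1 ≤ ‖w‖ ^ 2 * ‖y‖ ^ 2 := by
  rw [← mul_pow]
  exact one_le_pow₀ (h ▸ real_inner_le_norm w y)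

theorem one_le_norm_sq_mul_norm_sub_sq_of_mem_convexHull {s : Set E} {w z x : E}
    (hs : ∀ y ∈ s, inner ℝ w y = 1) (hz : inner ℝ w z = 0) (hx : x ∈ convexHull ℝ s) :
    1 ≤ ‖w‖ ^ 2 * ‖x - z‖ ^ 2 :=
  one_le_norm_sq_mul_norm_sq_of_inner_eq_one <| by
    rw [inner_sub_right, inner_eq_of_mem_convexHull hs hx, hz, sub_zero]

end InnerProductSpace

namespace EuclideanSpace

variable {ι : Type*} [DecidableEq ι]

noncomputable def indicator (U : Finset ι) : EuclideanSpace ℝ ι := ∑ j ∈ U, single j 1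

theorem indicator_apply (U : Finset ι) (i : ι) : indicator U i = if i ∈ U then 1 else 0 := by
  simp [indicator]

variable [Fintype ι]

theorem inner_indicator_left (U : Finset ι) (y : EuclideanSpace ℝ ι) :
    inner ℝ (indicator U) y = ∑ j ∈ U, y j := by
  simp [indicator, sum_inner, inner_single_left]

theorem norm_indicator_sq (U : Finset ι) : ‖indicator U‖ ^ 2 = #U := by
  rw [← real_inner_self_eq_norm_sq, inner_indicator_left]
  simp +contextual [indicator_apply]

theorem inner_single_add_smul_indicator_left (a : ι) (U : Finset ι) (c : ℝ)
    (y : EuclideanSpace ℝ ι) :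
    inner ℝ (single a (1 : ℝ) + c • indicator U) y = y a + c * ∑ j ∈ U, y j := by
  simp [inner_add_left, inner_smul_left, inner_single_left, inner_indicator_left]

theorem norm_single_add_smul_indicator_sq {a : ι} {U : Finset ι} (ha : a ∉ U) (c : ℝ) :
    ‖single a (1 : ℝ) + c • indicator U‖ ^ 2 = 1 + c ^ 2 * #U := by
  rw [norm_add_sq_real, inner_smul_right, inner_single_left, indicator_apply, if_neg ha, norm_smul,
    mul_pow, norm_indicator_sq, PiLp.norm_single]
  simp

theorem norm_single_add_inv_smul_indicator_biUnion_sq_le_two {k : ℕ} {S : Fin k → Finset ι}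
    (hdisj : Pairwise (Disjoint on S)) (hcard : ∀ i, #(S i) = k) {a : ι}
    (ha : a ∉ univ.biUnion S) :
    ‖single a (1 : ℝ) + (k : ℝ)⁻¹ • indicator (univ.biUnion S)‖ ^ 2 ≤ 2 := by
  rw [norm_single_add_smul_indicator_sq ha, card_biUnion fun i _ j _ hij ↦ hdisj hij]
  simp only [hcard, sum_const, card_univ, Fintype.card_fin, smul_eq_mul, Nat.cast_mul]
  rcases eq_or_ne (k : ℝ) 0 with hk | hk
  · simp [hk]
  · field_simp
    norm_num

end EuclideanSpace

theorem fw_linear_oracle_lower_bound_core_general (d m : ℕ) (hmd : m < d)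
    (S : Fin (Nat.sqrt (d - m - 1)) → Finset (Fin d))
    (hSdisj : ∀ i j, i ≠ j → Disjoint (S i) (S j))
    (hSsub : ∀ i, ∀ c ∈ S i, m + 1 ≤ (c : ℕ))
    (hScard : ∀ i, (S i).card = Nat.sqrt (d - m - 1))
    (xstar x1 : EuclideanSpace ℝ (Fin d))
    (hxstar : ∀ j : Fin d, xstar j = if (j : ℕ) < m then 1 / 2 else 0)
    (hx1 : ∀ j : Fin d, x1 j = if (j : ℕ) = m then 1 else 0)
    (v : Fin (Nat.sqrt (d - m - 1)) → EuclideanSpace ℝ (Fin d))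
    (hv : ∀ i, ∀ j : Fin d, m ≤ (j : ℕ) → v i j = if j ∈ S i then 1 else 0) :
    ∀ x ∈ convexHull ℝ (insert x1 (Set.range v)),
      (1 : ℝ) / 4 ≤ 1 / 2 * ‖x - xstar‖ ^ 2 := by
  intro x hx
  set a : Fin d := ⟨m, hmd⟩
  set U := univ.biUnion S
  have hU : ∀ j ∈ U, m < (j : ℕ) := fun j hj ↦ by
    obtain ⟨i, -, hji⟩ := mem_biUnion.1 hj
    exact hSsub i j hji
  have haU : a ∉ U := fun h ↦ (hU a h).false
  set w := single a (1 : ℝ) + (Nat.sqrt (d - m - 1) : ℝ)⁻¹ • indicator U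
  have hw_x1 : inner ℝ w x1 = 1 := by
    rw [inner_single_add_smul_indicator_left,
      sum_eq_zero fun j hj ↦ by simp [hx1, (hU j hj).ne']]
    simp [hx1, a]
  have hw_xstar : inner ℝ w xstar = 0 := by
    rw [inner_single_add_smul_indicator_left,
      sum_eq_zero fun j hj ↦ by simp [hxstar, lt_asymm (hU j hj)]]
    simp [hxstar, a]
  have hw_v (i) : inner ℝ w (v i) = 1 := by
    have hk : (Nat.sqrt (d - m - 1) : ℝ) ≠ 0 := by exact_mod_cast i.pos.ne'
    have hSU : S i ⊆ U := subset_biUnion_of_mem S (mem_univ i)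
    rw [inner_single_add_smul_indicator_left, hv i a le_rfl, if_neg fun h ↦ haU (hSU h),
      sum_congr rfl fun j hj ↦ hv i j (hU j hj).le, sum_boole, filter_mem_eq_inter,
      inter_eq_right.2 hSU, hScard, zero_add]
    exact inv_mul_cancel₀ hk
  have hw_norm : ‖w‖ ^ 2 ≤ 2 :=
    norm_single_add_inv_smul_indicator_biUnion_sq_le_two (fun i j ↦ hSdisj i j) hScard haU
  have hcs := one_le_norm_sq_mul_norm_sub_sq_of_mem_convexHull
    (by rintro y (rfl | ⟨i, rfl⟩); exacts [hw_x1, hw_v i]) hw_xstar hx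
  nlinarith [sq_nonneg ‖x - xstar‖]

/-- core of the lower bound for linear-optimization-based
Frank-Wolfe-type methods over the hypercube (Theorem 2 of the paper).
Coordinates are 0-indexed: the 1-indexed coordinate set `{m+2, …, d}` becomes
`{j : Fin d | m + 1 ≤ j}`, the vector `x* = (1/2)·∑_{i=1}^m e_i` has value `1/2`
on coordinates `j < m`, and `x_1 = e_{m+1}` is the indicator of coordinate `m`. -/
theorem fw_linear_oracle_lower_bound_core (d m : ℕ) (hm : 0 < m) (hmd : m < d)
    (S : Fin (Nat.sqrt (d - m - 1)) → Finset (Fin d))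
    (hSdisj : ∀ i j, i ≠ j → Disjoint (S i) (S j))
    (hSsub : ∀ i, ∀ c ∈ S i, m + 1 ≤ (c : ℕ))
    (hScard : ∀ i, (S i).card = Nat.sqrt (d - m - 1))
    (xstar x1 : EuclideanSpace ℝ (Fin d))
    (hxstar : ∀ j : Fin d, xstar j = if (j : ℕ) < m then 1 / 2 else 0)
    (hx1 : ∀ j : Fin d, x1 j = if (j : ℕ) = m then 1 else 0)
    (v : Fin (Nat.sqrt (d - m - 1)) → EuclideanSpace ℝ (Fin d))
    (hvbox : ∀ i j, v i j ∈ Set.Icc (0 : ℝ) 1)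
    (hv : ∀ i, ∀ j : Fin d, m ≤ (j : ℕ) → v i j = if j ∈ S i then 1 else 0) :
    ∀ x ∈ convexHull ℝ (insert x1 (Set.range v)),
      (1 : ℝ) / 4 ≤ 1 / 2 * ‖x - xstar‖ ^ 2 :=
  fw_linear_oracle_lower_bound_core_general d m hmd S hSdisj hSsub hScard xstar x1 hxstar hx1 v hv
end

section
/- Suppose x_t = ∑_{i=1}^k λ_i v_i where v_1, …, v_k ∈ V, λ_i ≥ 0, ∑λ_i = 1, and let η ∈ [0,1]. Suppose there exists R ≤ 1, a point x* ∈ X*, coefficients Δ*_1, …, Δ*_k with Δ*_i ∈ [0,λ_i] and ∑_{i=1}^k Δ*_i ≤ R, and a point z ∈ F*, such that x* = ∑_{i=1}^k (λ_i − Δ*_i) v_i + (∑_{i=1}^k Δ*_i) z. Let v_{k+1} ∈ argmin_{u∈V} ( uᵀ∇f(x_t) + βηR‖u − x_t‖² ), and let x_{t+1} be either a minimizer of x ↦ xᵀ∇f(x_t) + (β/2)‖x − x_t‖² over conv(v_1,…,v_{k+1}), or a minimizer of f over conv(v_1,…,v_{k+1}). Then f(x_{t+1}) − f* ≤ (1−η)(f(x_t)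 − f*) + η²β( 2‖x_t − x*‖² + 4R²D_{F*}² ). -/
/-!
Compare `x_{t+1}` with the point `y = x_t + η (x* - x_t + S (w - z))`, `S = ∑ Δ_i`, which lies in
`conv (v_1, …, v_k, w)` because it moves the weight `η Δ_i` from each `v_i` onto `w`. Either choice
of `x_{t+1}` does at least as well as `y` on the quadratic upper model given by `β`-smoothness.
Convexity bounds `⟪∇f x_t, x* - x_t⟫` by `f* - f x_t`. Since `z` is a convex combination of
vertices of `F*`, all within `‖x* - x_t‖ + D_{F*}` of `x_t`, the NEP choice of `w` trades
`⟪∇f x_t, w - z⟫` against the penalty `βηR ‖w - x_t‖²`. What remains is a scalar inequality.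
-/

open scoped RealInnerProductSpace
open Set

section Gradient

variable {E : Type*} [NormedAddCommGroup E] [InnerProductSpace ℝ E] [CompleteSpace E]
  {f : E → ℝ} {g : E → E}

theorem hasDerivAt_comp_add_smul_of_hasGradientAt (hgrad : ∀ x, HasGradientAt f (g x) x)
    (a u : E) (t : ℝ) :
    HasDerivAt (fun s : ℝ => f (a + s • u)) ⟪g (a + t • u), u⟫ t := by
  have hline : HasDerivAt (fun s : ℝ => a + s • u) u t := by
    simpa using ((hasDerivAt_id t).smul_const u).const_add a
  simpa [InnerProductSpace.toDual_apply_apply, Function.comp_def] using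
    (hgrad (a + t • u)).hasFDerivAt.comp_hasDerivAt t hline

theorem ConvexOn.inner_gradient_le_sub (hf : ConvexOn ℝ univ f)
    (hgrad : ∀ x, HasGradientAt f (g x) x) (a b : E) :
    ⟪g a, b - a⟫ ≤ f b - f a := by
  have hline : ConvexOn ℝ univ (fun s : ℝ => f (a + s • (b - a))) := by
    have hcomp := hf.comp_affineMap (AffineMap.lineMap (k := ℝ) a b)
    have heq : f ∘ AffineMap.lineMap a b = fun s : ℝ => f (a + s • (b - a)) := by
      funext s
      simp [AffineMap.lineMap_apply_module', add_comm]
    rwa [heq, preimage_univ] at hcomp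
  have hderiv := hasDerivAt_comp_add_smul_of_hasGradientAt hgrad a (b - a) 0
  rw [zero_smul, add_zero] at hderiv
  simpa [slope_def_field] using
    hline.le_slope_of_hasDerivAt (mem_univ 0) (mem_univ 1) zero_lt_one hderiv

theorem le_add_inner_add_sq_of_lipschitz_gradient (hgrad : ∀ x, HasGradientAt f (g x) x)
    {β : ℝ} (hsmooth : ∀ x y, ‖g x - g y‖ ≤ β * ‖x - y‖) (a b : E) :
    f b ≤ f a + ⟪g a, b - a⟫ + β / 2 * ‖b - a‖ ^ 2 := by
  set u := b - a
  let h : ℝ → ℝ := fun t => t * ⟪g a, u⟫ + β / 2 * t ^ 2 * ‖u‖ ^ 2 - f (a + t • u)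
  have hderiv (t : ℝ) :
      HasDerivAt h (⟪g a, u⟫ + β * t * ‖u‖ ^ 2 - ⟪g (a + t • u), u⟫) t := by
    have hquad := ((hasDerivAt_id t).mul_const ⟪g a, u⟫).add
      (((hasDerivAt_pow 2 t).const_mul (β / 2)).mul_const (‖u‖ ^ 2))
    refine (hquad.sub (hasDerivAt_comp_add_smul_of_hasGradientAt hgrad a u t)).congr_deriv ?_
    push_cast
    ring
  have hderiv_nonneg (t : ℝ) (ht : 0 ≤ t) :
      0 ≤ ⟪g a, u⟫ + β * t * ‖u‖ ^ 2 - ⟪g (a + t • u), u⟫ := by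
    have hlip : ⟪g (a + t • u) - g a, u⟫ ≤ β * t * ‖u‖ ^ 2 :=
      calc ⟪g (a + t • u) - g a, u⟫ ≤ ‖g (a + t • u) - g a‖ * ‖u‖ := real_inner_le_norm _ _
        _ ≤ β * ‖(a + t • u) - a‖ * ‖u‖ :=
          mul_le_mul_of_nonneg_right (hsmooth _ _) (norm_nonneg u)
        _ = β * t * ‖u‖ ^ 2 := by
          rw [add_sub_cancel_left, norm_smul, Real.norm_of_nonneg ht]
          ring
    rw [inner_sub_left] at hlip
    linarith
  have hmono : MonotoneOn h (Icc 0 1) :=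
    monotoneOn_of_hasDerivWithinAt_nonneg (convex_Icc 0 1)
      (fun t _ => (hderiv t).continuousAt.continuousWithinAt)
      (fun t _ => (hderiv t).hasDerivWithinAt)
      (fun t ht => hderiv_nonneg t (interior_subset ht).1)
  have h01 := hmono (left_mem_Icc.2 zero_le_one) (right_mem_Icc.2 zero_le_one) zero_le_one
  simp only [h, zero_mul, zero_smul, add_zero, one_mul, one_smul, u, add_sub_cancel] at h01
  linarith

end Gradient

theorem nep_step_coefficient_le {S R A D t : ℝ} (hS : S ∈ Icc 0 R) (hR : R ≤ 1)
    (hA : 0 ≤ A) (hD : 0 ≤ D) :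
    S * R * ((A + D) ^ 2 - t ^ 2) + ((1 - S) * A + S * D + S * t) ^ 2 / 2
      ≤ 2 * A ^ 2 + 4 * R ^ 2 * D ^ 2 := by
  obtain ⟨hS0, hSR⟩ := hS
  set B := (1 - S) * A + S * D
  have ht_free : S * R * (A + D) ^ 2 + B ^ 2 ≤ 2 * A ^ 2 + 4 * R ^ 2 * D ^ 2 := by
    nlinarith [sq_nonneg (A - R * D),
      mul_nonneg (mul_nonneg (sub_nonneg.2 hSR) (by linarith : (0 : ℝ) ≤ 1 - S)) (mul_nonneg hA hD),
      mul_nonneg (mul_nonneg hS0 (by linarith : (0 : ℝ) ≤ 2 - R - S)) (sq_nonneg A),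
      mul_nonneg (mul_nonneg (sub_nonneg.2 hSR) (by linarith : (0 : ℝ) ≤ 2 * R + S)) (sq_nonneg D)]
  rcases (hS0.trans hSR).eq_or_lt with hR0 | hRpos
  · obtain rfl : S = 0 := le_antisymm (hR0 ▸ hSR) hS0
    nlinarith
  -- the quadratic in `t` on the left is maximal at `t = B / (2R - S)`
  have h2RS : 2 * R - S ≠ 0 := by linarith
  have ht_max : 0 ≤ B ^ 2 / 2 + S * R * t ^ 2 - S * t * B - S ^ 2 * t ^ 2 / 2 := by
    have hsos : B ^ 2 / 2 + S * R * t ^ 2 - S * t * B - S ^ 2 * t ^ 2 / 2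
        = (S * ((2 * R - S) * t - B) ^ 2 + 2 * (R - S) * B ^ 2) / (2 * (2 * R - S)) := by
      field_simp
      ring
    rw [hsos]
    apply div_nonneg _ (by linarith)
    nlinarith [mul_nonneg hS0 (sq_nonneg ((2 * R - S) * t - B)), sq_nonneg B]
  nlinarith

section Step

variable {E : Type*} [NormedAddCommGroup E] [InnerProductSpace ℝ E]

theorem le_quadratic_model_of_minimizes {f : E → ℝ} {g : E → E} {β : ℝ}
    (hdesc : ∀ a b, f b ≤ f a + ⟪g a, b - a⟫ + β / 2 * ‖b - a‖ ^ 2)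
    {C : Set E} {x y xnext : E} (hy : y ∈ C)
    (hxnext : (∀ y ∈ C, ⟪g x, xnext⟫ + β / 2 * ‖xnext - x‖ ^ 2
        ≤ ⟪g x, y⟫ + β / 2 * ‖y - x‖ ^ 2) ∨ (∀ y ∈ C, f xnext ≤ f y)) :
    f xnext ≤ f x + ⟪g x, y - x⟫ + β / 2 * ‖y - x‖ ^ 2 := by
  rcases hxnext with hmodel | hmin
  · have hy_model := hmodel y hy
    have hdesc_next := hdesc x xnext
    rw [inner_sub_right] at hdesc_next ⊢
    linarith
  · exact (hmin y hy).trans (hdesc x y)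

theorem add_smul_sub_mem_convexHull_insert {ι : Type*} [Fintype ι] {v : ι → E}
    {lam Δ : ι → ℝ} (w : E) {η : ℝ} (hΔ : ∀ i, Δ i ∈ Icc 0 (lam i)) (hlam : ∑ i, lam i = 1)
    (hη : η ∈ Icc (0 : ℝ) 1) :
    ∑ i, lam i • v i + η • ((∑ i, Δ i) • w - ∑ i, Δ i • v i)
      ∈ convexHull ℝ (insert w (range v)) := by
  have hmem := (convex_convexHull ℝ (insert w (range v))).sum_mem (t := Finset.univ)
    (w := fun o : Option ι => o.elim (η * ∑ i, Δ i) fun i => lam i - η * Δ i)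
    (z := fun o => o.elim w v) ?_ ?_ ?_
  · convert hmem using 1
    simp only [Fintype.sum_option, Option.elim, sub_smul, Finset.sum_sub_distrib, smul_sub,
      Finset.smul_sum, smul_smul]
    abel
  · rintro (_ | i) -
    · exact mul_nonneg hη.1 (Finset.sum_nonneg fun i _ => (hΔ i).1)
    · obtain ⟨hΔ0, hΔlam⟩ := hΔ i
      change 0 ≤ lam i - η * Δ i
      nlinarith [hη.2]
  · simp only [Fintype.sum_option, Option.elim, Finset.sum_sub_distrib, ← Finset.mul_sum, hlam]
    ring
  · rintro (_ | i) -
    · exact subset_convexHull ℝ _ (mem_insert w _)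
    · exact subset_convexHull ℝ _ (mem_insert_of_mem w (mem_range_self i))

theorem le_inner_of_mem_convexHull_s4 {s : Set E} {G z : E} {a : ℝ} (hs : ∀ u ∈ s, a ≤ ⟪G, u⟫)
    (hz : z ∈ convexHull ℝ s) : a ≤ ⟪G, z⟫ :=
  convexHull_min hs (convex_halfSpace_ge (innerₛₗ ℝ G).isLinear a) hz

theorem inner_add_sq_norm_le_of_mem_convexHull_inter {V F : Set E} {G x xstar w z : E} {c D : ℝ}
    (hc : 0 ≤ c) (hw : ∀ u ∈ V, ⟪G, w⟫ + c * ‖w - x‖ ^ 2 ≤ ⟪G, u⟫ + c * ‖u - x‖ ^ 2)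
    (hF : ∀ u ∈ F, ‖u - xstar‖ ≤ D) (hz : z ∈ convexHull ℝ (V ∩ F)) :
    ⟪G, w⟫ + c * ‖w - x‖ ^ 2 ≤ ⟪G, z⟫ + c * (‖xstar - x‖ + D) ^ 2 := by
  suffices ⟪G, w⟫ + c * ‖w - x‖ ^ 2 - c * (‖xstar - x‖ + D) ^ 2 ≤ ⟪G, z⟫ by linarith
  refine le_inner_of_mem_convexHull_s4 (fun u hu => ?_) hz
  obtain ⟨huV, huF⟩ := hu
  have hdist : ‖u - x‖ ≤ ‖xstar - x‖ + D := by
    calc ‖u - x‖ ≤ ‖u - xstar‖ + ‖xstar - x‖ := norm_sub_le_norm_sub_add_norm_sub u xstar x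
      _ ≤ ‖xstar - x‖ + D := by linarith [hF u huF]
  have hpenalty := mul_le_mul_of_nonneg_left (pow_le_pow_left₀ (norm_nonneg _) hdist 2) hc
  linarith [hw u huV]

theorem norm_sub_add_smul_sub_le (x xstar w z : E) {S : ℝ} (hS : S ∈ Icc (0 : ℝ) 1) :
    ‖xstar - x + S • (w - z)‖ ≤ (1 - S) * ‖xstar - x‖ + S * ‖xstar - z‖ + S * ‖w - x‖ := by
  have hsplit : xstar - x + S • (w - z)
      = (1 - S) • (xstar - x) + S • (xstar - z) + S • (w - x) := by module
  rw [hsplit]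
  refine norm_add₃_le.trans_eq ?_
  rw [norm_smul, norm_smul, norm_smul, Real.norm_of_nonneg (sub_nonneg.2 hS.2),
    Real.norm_of_nonneg hS.1]

theorem inner_add_sq_norm_smul_nep_direction_le {G x xstar w z : E} {S R D η β e : ℝ}
    (hgrad : ⟪G, xstar - x⟫ ≤ e)
    (horacle : ⟪G, w⟫ + β * η * R * ‖w - x‖ ^ 2
      ≤ ⟪G, z⟫ + β * η * R * (‖xstar - x‖ + D) ^ 2)
    (hzD : ‖xstar - z‖ ≤ D) (hS : S ∈ Icc 0 R) (hR : R ≤ 1) (hη : 0 ≤ η) (hβ : 0 ≤ β) :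
    ⟪G, η • (xstar - x + S • (w - z))⟫ + β / 2 * ‖η • (xstar - x + S • (w - z))‖ ^ 2
      ≤ η * e + η ^ 2 * β * (2 * ‖x - xstar‖ ^ 2 + 4 * R ^ 2 * D ^ 2) := by
  set A := ‖xstar - x‖
  set t := ‖w - x‖
  set d := xstar - x + S • (w - z)
  have hS0 := hS.1
  have hinner : ⟪G, d⟫ ≤ e + S * (β * η * R * ((A + D) ^ 2 - t ^ 2)) := by
    have hd : ⟪G, d⟫ = ⟪G, xstar - x⟫ + S * (⟪G, w⟫ - ⟪G, z⟫) := by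
      simp only [d, inner_add_right, inner_sub_right, real_inner_smul_right]
    have hgap := mul_le_mul_of_nonneg_left
      (by linarith : ⟪G, w⟫ - ⟪G, z⟫ ≤ β * η * R * ((A + D) ^ 2 - t ^ 2)) hS0
    linarith
  have hnorm : ‖d‖ ^ 2 ≤ ((1 - S) * A + S * D + S * t) ^ 2 := by
    refine pow_le_pow_left₀ (norm_nonneg _) ?_ 2
    refine (norm_sub_add_smul_sub_le x xstar w z ⟨hS0, hS.2.trans hR⟩).trans ?_
    nlinarith
  have hcoef := mul_le_mul_of_nonneg_left
    (nep_step_coefficient_le (t := t) hS hR (norm_nonneg (xstar - x))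
      ((norm_nonneg _).trans hzD))
    (by positivity : 0 ≤ β * η ^ 2)
  rw [real_inner_smul_right, norm_smul, Real.norm_of_nonneg hη, mul_pow, norm_sub_rev x xstar]
  nlinarith [mul_le_mul_of_nonneg_left hinner hη,
    mul_le_mul_of_nonneg_left hnorm (by positivity : 0 ≤ β / 2 * η ^ 2)]

end Step

theorem fw_nep_polytope_one_step_improvement_general {d : ℕ}
    (V : Set (EuclideanSpace ℝ (Fin d)))
    (K : Set (EuclideanSpace ℝ (Fin d)))
    (f : EuclideanSpace ℝ (Fin d) → ℝ)
    (g : EuclideanSpace ℝ (Fin d) → EuclideanSpace ℝ (Fin d))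
    (hfconv : ConvexOn ℝ Set.univ f)
    (hgrad : ∀ x, HasGradientAt f (g x) x)
    (β : ℝ) (hβ : 0 < β)
    (hsmooth : ∀ x y, ‖g x - g y‖ ≤ β * ‖x - y‖)
    (fstar : ℝ)
    -- the set F* : a convex subset of K containing all optimal solutions,
    -- each of whose points lies in the convex hull of the vertices inside it
    (Fstar : Set (EuclideanSpace ℝ (Fin d)))
    (hXF : ∀ y ∈ K, f y = fstar → y ∈ Fstar)
    (hFvert : ∀ y ∈ Fstar, y ∈ convexHull ℝ (V ∩ Fstar))
    (DF : ℝ) (hDF : ∀ u ∈ Fstar, ∀ w ∈ Fstar, ‖u - w‖ ≤ DF)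
    -- the current iterate and its convex decomposition into vertices
    (k : ℕ) (vv : Fin k → EuclideanSpace ℝ (Fin d)) (lam : Fin k → ℝ)
    (hlam1 : ∑ i, lam i = 1)
    (xt : EuclideanSpace ℝ (Fin d)) (hxt : xt = ∑ i, lam i • vv i)
    (η : ℝ) (hη : η ∈ Set.Icc (0:ℝ) 1)
    (R : ℝ) (hR : R ≤ 1)
    -- an optimal solution reachable by moving weight at most R onto F*
    (xstar : EuclideanSpace ℝ (Fin d)) (hxstarK : xstar ∈ K)
    (hxstaropt : f xstar = fstar)
    (Δ : Fin k → ℝ) (hΔ : ∀ i, Δ i ∈ Set.Icc 0 (lam i)) (hΔsum : ∑ i, Δ i ≤ R)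
    (z : EuclideanSpace ℝ (Fin d)) (hz : z ∈ Fstar)
    (hdecomp : xstar = ∑ i, (lam i - Δ i) • vv i + (∑ i, Δ i) • z)
    -- the new vertex returned by the NEP oracle with parameter ρ = ηR
    (w : EuclideanSpace ℝ (Fin d))
    (hw : ∀ u ∈ V, ⟪g xt, w⟫ + β * η * R * ‖w - xt‖ ^ 2
        ≤ ⟪g xt, u⟫ + β * η * R * ‖u - xt‖ ^ 2)
    -- the next iterate (Option 1 or Option 2)
    (xnext : EuclideanSpace ℝ (Fin d))
    (hxnext :
      (xnext ∈ convexHull ℝ (insert w (Set.range vv)) ∧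
        ∀ y ∈ convexHull ℝ (insert w (Set.range vv)),
          ⟪g xt, xnext⟫ + β / 2 * ‖xnext - xt‖ ^ 2
            ≤ ⟪g xt, y⟫ + β / 2 * ‖y - xt‖ ^ 2) ∨
      (xnext ∈ convexHull ℝ (insert w (Set.range vv)) ∧
        ∀ y ∈ convexHull ℝ (insert w (Set.range vv)), f xnext ≤ f y)) :
    f xnext - fstar ≤ (1 - η) * (f xt - fstar)
      + η ^ 2 * β * (2 * ‖xt - xstar‖ ^ 2 + 4 * R ^ 2 * DF ^ 2) := by
  set S := ∑ i, Δ i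
  have hS : S ∈ Icc 0 R := ⟨Finset.sum_nonneg fun i _ => (hΔ i).1, hΔsum⟩
  have hxstarF : xstar ∈ Fstar := hXF xstar hxstarK hxstaropt
  have hdir : xstar - xt + S • (w - z) = S • w - ∑ i, Δ i • vv i := by
    simp only [hdecomp, hxt, sub_smul, smul_sub, Finset.sum_sub_distrib]
    abel
  have hy : xt + η • (xstar - xt + S • (w - z)) ∈ convexHull ℝ (insert w (range vv)) := by
    rw [hdir, hxt]
    exact add_smul_sub_mem_convexHull_insert w hΔ hlam1 hη
  have hmodel := le_quadratic_model_of_minimizes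
    (le_add_inner_add_sq_of_lipschitz_gradient hgrad hsmooth) hy (hxnext.imp And.right And.right)
  have horacle := inner_add_sq_norm_le_of_mem_convexHull_inter
    (mul_nonneg (mul_nonneg hβ.le hη.1) (hS.1.trans hS.2)) hw
    (fun u hu => hDF u hu xstar hxstarF) (hFvert z hz)
  have hstep := inner_add_sq_norm_smul_nep_direction_le
    (hxstaropt ▸ hfconv.inner_gradient_le_sub hgrad xt xstar) horacle
    (hDF xstar hxstarF z hz) hS hR hη.1 hβ.le
  rw [add_sub_cancel_left] at hmodel
  linarith

/-- one-step error reduction for the linearly convergent NEP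
oracle-based Frank-Wolfe variant for polytopes (Lemma 2 of the paper). -/
theorem fw_nep_polytope_one_step_improvement {d : ℕ}
    (V : Set (EuclideanSpace ℝ (Fin d))) (hVfin : V.Finite)
    (K : Set (EuclideanSpace ℝ (Fin d))) (hK : K = convexHull ℝ V)
    (hVext : V = K.extremePoints ℝ)
    (f : EuclideanSpace ℝ (Fin d) → ℝ)
    (g : EuclideanSpace ℝ (Fin d) → EuclideanSpace ℝ (Fin d))
    (hfconv : ConvexOn ℝ Set.univ f)
    (hgrad : ∀ x, HasGradientAt f (g x) x)
    (β : ℝ) (hβ : 0 < β)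
    (hsmooth : ∀ x y, ‖g x - g y‖ ≤ β * ‖x - y‖)
    (fstar : ℝ) (hfstar : ∀ x ∈ K, fstar ≤ f x)
    -- the set F* : a convex subset of K containing all optimal solutions,
    -- each of whose points lies in the convex hull of the vertices inside it
    (Fstar : Set (EuclideanSpace ℝ (Fin d)))
    (hFK : Fstar ⊆ K) (hFconv : Convex ℝ Fstar)
    (hXF : ∀ y ∈ K, f y = fstar → y ∈ Fstar)
    (hFvert : ∀ y ∈ Fstar, y ∈ convexHull ℝ (V ∩ Fstar))
    (DF : ℝ) (hDF : ∀ u ∈ Fstar, ∀ w ∈ Fstar, ‖u - w‖ ≤ DF)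
    -- the current iterate and its convex decomposition into vertices
    (k : ℕ) (vv : Fin k → EuclideanSpace ℝ (Fin d)) (lam : Fin k → ℝ)
    (hvvV : ∀ i, vv i ∈ V) (hlam0 : ∀ i, 0 ≤ lam i) (hlam1 : ∑ i, lam i = 1)
    (xt : EuclideanSpace ℝ (Fin d)) (hxt : xt = ∑ i, lam i • vv i)
    (η : ℝ) (hη : η ∈ Set.Icc (0:ℝ) 1)
    (R : ℝ) (hR : R ≤ 1)
    -- an optimal solution reachable by moving weight at most R onto F*
    (xstar : EuclideanSpace ℝ (Fin d)) (hxstarK : xstar ∈ K)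
    (hxstaropt : f xstar = fstar)
    (Δ : Fin k → ℝ) (hΔ : ∀ i, Δ i ∈ Set.Icc 0 (lam i)) (hΔsum : ∑ i, Δ i ≤ R)
    (z : EuclideanSpace ℝ (Fin d)) (hz : z ∈ Fstar)
    (hdecomp : xstar = ∑ i, (lam i - Δ i) • vv i + (∑ i, Δ i) • z)
    -- the new vertex returned by the NEP oracle with parameter ρ = ηR
    (w : EuclideanSpace ℝ (Fin d)) (hwV : w ∈ V)
    (hw : ∀ u ∈ V, ⟪g xt, w⟫ + β * η * R * ‖w - xt‖ ^ 2
        ≤ ⟪g xt, u⟫ + β * η * R * ‖u - xt‖ ^ 2)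
    -- the next iterate (Option 1 or Option 2)
    (xnext : EuclideanSpace ℝ (Fin d))
    (hxnext :
      (xnext ∈ convexHull ℝ (insert w (Set.range vv)) ∧
        ∀ y ∈ convexHull ℝ (insert w (Set.range vv)),
          ⟪g xt, xnext⟫ + β / 2 * ‖xnext - xt‖ ^ 2
            ≤ ⟪g xt, y⟫ + β / 2 * ‖y - xt‖ ^ 2) ∨
      (xnext ∈ convexHull ℝ (insert w (Set.range vv)) ∧
        ∀ y ∈ convexHull ℝ (insert w (Set.range vv)), f xnext ≤ f y)) :
    f xnext - fstar ≤ (1 - η) * (f xt - fstar)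
      + η ^ 2 * β * (2 * ‖xt - xstar‖ ^ 2 + 4 * R ^ 2 * DF ^ 2) :=
  fw_nep_polytope_one_step_improvement_general V K f g hfconv hgrad β hβ hsmooth fstar Fstar hXF
    hFvert DF hDF k vv lam hlam1 xt hxt η hη R hR xstar hxstarK hxstaropt Δ hΔ hΔsum z hz hdecomp w
    hw xnext hxnext
end

section
/- Let K ⊆ ℝ^d be a convex compact polytope with vertex set V, let F* ⊆ K be convex, and let x = ∑_{i=1}^k λ_i v_i with v_i ∈ V, λ_i ≥ 0, ∑λ_i = 1. Suppose a point x* ∈ K can be written as x* = ∑_{i=1}^k (λ_i − Δ*_i) v_i + (∑_{i=1}^k Δ*_i) z with Δ*_i ∈ [0,λ_i], z ∈ F*, x* ∈ F*, and ∑_{i=1}^k Δ*_i ≤ R for some R ≤ 1. Then x* can also be written as x* = ∑_{i=1}^k (λ_i − Δ̄_i) v_i + (∑_{i=1}^k Δ̄_i) z̄ with Δ̄_i ∈ [0,λ_i], z̄ ∈ F*, and ∑_{i=1}^k Δ̄_i = R exactly. -/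
/-! The admissible weight vectors `Δ` for a point `y` form a convex set: mixing two
decompositions mixes the points of `F*` they use, by convexity of `F*`. If `y ∈ F*`, this set
contains `λ` itself (with `z = y`), whose total weight is `1`. Since the set is convex, hence
connected, the total weight `∑ Δ i` takes every value between `∑ Δ* i ≤ R` and `1`. -/

open Set

section WeightDecomposition

variable {ι E : Type*} [Fintype ι] [AddCommGroup E] [Module ℝ E]

def weightDecompositions (F : Set E) (lam : ι → ℝ) (v : ι → E) (y : E) : Set (ι → ℝ) :=
  {Δ | (∀ i, Δ i ∈ Icc 0 (lam i)) ∧ ∃ z ∈ F, y = ∑ i, (lam i - Δ i) • v i + (∑ i, Δ i) • z}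

theorem convex_weightDecompositions {F : Set E} (hF : Convex ℝ F) (lam : ι → ℝ) (v : ι → E)
    (y : E) : Convex ℝ (weightDecompositions F lam v y) := by
  rintro Δ₁ ⟨hΔ₁, z₁, hz₁, hy₁⟩ Δ₂ ⟨hΔ₂, z₂, hz₂, hy₂⟩ a b ha hb hab
  have hsum₁ : 0 ≤ ∑ i, Δ₁ i := Finset.sum_nonneg fun i _ => (hΔ₁ i).1
  have hsum₂ : 0 ≤ ∑ i, Δ₂ i := Finset.sum_nonneg fun i _ => (hΔ₂ i).1
  obtain ⟨z, hz, hz_eq⟩ :=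
    hF.exists_mem_add_smul_eq hz₁ hz₂ (mul_nonneg ha hsum₁) (mul_nonneg hb hsum₂)
  refine ⟨fun i => (convex_Icc 0 (lam i)) (hΔ₁ i) (hΔ₂ i) ha hb hab, z, hz, ?_⟩
  have hsum : ∑ i, (a • Δ₁ + b • Δ₂) i = a * ∑ i, Δ₁ i + b * ∑ i, Δ₂ i := by
    simp only [Pi.add_apply, Pi.smul_apply, smul_eq_mul, Finset.sum_add_distrib, Finset.mul_sum]
  have hvert : ∑ i, (lam i - (a • Δ₁ + b • Δ₂) i) • v i
      = a • ∑ i, (lam i - Δ₁ i) • v i + b • ∑ i, (lam i - Δ₂ i) • v i := by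
    simp only [Finset.smul_sum, ← Finset.sum_add_distrib, smul_smul, ← add_smul]
    refine Finset.sum_congr rfl fun i _ => congrArg (· • v i) ?_
    simp only [Pi.add_apply, Pi.smul_apply, smul_eq_mul]
    linear_combination (-lam i) * hab
  rw [hsum, hz_eq, hvert, ← Convex.combo_self hab y]
  nth_rw 1 [hy₁]
  rw [hy₂]
  module

theorem mem_weightDecompositions_self {F : Set E} {lam : ι → ℝ} (hlam0 : ∀ i, 0 ≤ lam i)
    (hlam1 : ∑ i, lam i = 1) (v : ι → E) {y : E} (hy : y ∈ F) :
    lam ∈ weightDecompositions F lam v y :=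
  ⟨fun i => ⟨hlam0 i, le_rfl⟩, y, hy, by simp [hlam1]⟩

end WeightDecomposition

theorem fw_nep_exact_weight_decomposition_general {d : ℕ}
    (Fstar : Set (EuclideanSpace ℝ (Fin d)))
    (hFconv : Convex ℝ Fstar)
    (k : ℕ) (vv : Fin k → EuclideanSpace ℝ (Fin d)) (lam : Fin k → ℝ)
    (hlam0 : ∀ i, 0 ≤ lam i) (hlam1 : ∑ i, lam i = 1)
    (R : ℝ) (hR : R ≤ 1)
    (xstar : EuclideanSpace ℝ (Fin d)) (hxstarF : xstar ∈ Fstar)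
    (Δ : Fin k → ℝ) (hΔ : ∀ i, Δ i ∈ Set.Icc 0 (lam i)) (hΔsum : ∑ i, Δ i ≤ R)
    (z : EuclideanSpace ℝ (Fin d)) (hz : z ∈ Fstar)
    (hdecomp : xstar = ∑ i, (lam i - Δ i) • vv i + (∑ i, Δ i) • z) :
    ∃ Δbar : Fin k → ℝ, ∃ zbar ∈ Fstar,
      (∀ i, Δbar i ∈ Set.Icc 0 (lam i)) ∧ (∑ i, Δbar i = R) ∧
      xstar = ∑ i, (lam i - Δbar i) • vv i + (∑ i, Δbar i) • zbar := by
  have hΔmem : Δ ∈ weightDecompositions Fstar lam vv xstar := ⟨hΔ, z, hz, hdecomp⟩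
  have hlam_mem := mem_weightDecompositions_self hlam0 hlam1 vv hxstarF
  have hR_mem : R ∈ Icc (∑ i, Δ i) (∑ i, lam i) := ⟨hΔsum, hlam1 ▸ hR⟩
  obtain ⟨Δbar, ⟨hbounds, zbar, hzbar, hxstar⟩, hsum⟩ :=
    (convex_weightDecompositions hFconv lam vv xstar).isPreconnected.intermediate_value
      hΔmem hlam_mem (by fun_prop) hR_mem
  exact ⟨Δbar, zbar, hzbar, hbounds, hsum, hxstar⟩

/-- the amount of weight moved onto `F*` in the vertex
decomposition can be taken to be exactly `R` (Observation 1 of the paper). -/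
theorem fw_nep_exact_weight_decomposition {d : ℕ}
    (V : Set (EuclideanSpace ℝ (Fin d))) (hVfin : V.Finite)
    (K : Set (EuclideanSpace ℝ (Fin d))) (hK : K = convexHull ℝ V)
    (Fstar : Set (EuclideanSpace ℝ (Fin d)))
    (hFK : Fstar ⊆ K) (hFconv : Convex ℝ Fstar)
    (k : ℕ) (vv : Fin k → EuclideanSpace ℝ (Fin d)) (lam : Fin k → ℝ)
    (hvvV : ∀ i, vv i ∈ V) (hlam0 : ∀ i, 0 ≤ lam i) (hlam1 : ∑ i, lam i = 1)
    (x : EuclideanSpace ℝ (Fin d)) (hx : x = ∑ i, lam i • vv i)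
    (R : ℝ) (hR : R ≤ 1)
    (xstar : EuclideanSpace ℝ (Fin d)) (hxstarF : xstar ∈ Fstar)
    (Δ : Fin k → ℝ) (hΔ : ∀ i, Δ i ∈ Set.Icc 0 (lam i)) (hΔsum : ∑ i, Δ i ≤ R)
    (z : EuclideanSpace ℝ (Fin d)) (hz : z ∈ Fstar)
    (hdecomp : xstar = ∑ i, (lam i - Δ i) • vv i + (∑ i, Δ i) • z) :
    ∃ Δbar : Fin k → ℝ, ∃ zbar ∈ Fstar,
      (∀ i, Δbar i ∈ Set.Icc 0 (lam i)) ∧ (∑ i, Δbar i = R) ∧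
      xstar = ∑ i, (lam i - Δbar i) • vv i + (∑ i, Δbar i) • zbar :=
  fw_nep_exact_weight_decomposition_general Fstar hFconv k vv lam hlam0 hlam1 R hR xstar hxstarF Δ
    hΔ hΔsum z hz hdecomp
end

section
/- Let (a_t)_{t≥1} and (b_t)_{t≥1} be sequences of non-negative real numbers such that for all t ≥ 1: a_{t+1} ≤ (1 − 2/(t+1))·a_t + b_t/(t+1)². Then for all t ≥ 2: a_t ≤ (1/t²)·∑_{k=1}^{t−1} b_k. In particular, if b_t ≤ M for all t ≥ 1 for some M > 0, then a_t ≤ M/(t+1) for all t ≥ 2. -/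
/-!
Multiplying the recursion by `(t + 1) ^ 2` gives `(t + 1) ^ 2 a (t + 1) ≤ (t ^ 2 - 1) a t + b t`.
At `t = 1` the coefficient `t ^ 2 - 1` vanishes, so `4 a 2 ≤ b 1`; for `t ≥ 2` it is at most `t ^ 2`
because `a t ≥ 0`. Hence `t ^ 2 a t` grows by at most `b t` per step and telescopes to
`∑_{1 ≤ k < t} b k`. The bound `M / (t + 1)` follows from `(t - 1) M / t ^ 2 ≤ M / (t + 1)`.
-/

open Finset

theorem le_add_sum_Ico_of_le_add {s b : ℕ → ℝ} {m : ℕ}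
    (h : ∀ t, m ≤ t → s (t + 1) ≤ s t + b t) {n : ℕ} (hmn : m ≤ n) :
    s n ≤ s m + ∑ k ∈ Ico m n, b k := by
  induction n, hmn using Nat.le_induction with
  | base => simp
  | succ n hmn ih =>
    rw [sum_Ico_succ_top hmn]
    linarith [h n hmn]

theorem add_one_sq_mul_le_of_le {x p q r : ℝ} (hx : 0 < x + 1)
    (h : p ≤ (1 - 2 / (x + 1)) * q + r / (x + 1) ^ 2) :
    (x + 1) ^ 2 * p ≤ (x ^ 2 - 1) * q + r := by
  calc (x + 1) ^ 2 * p ≤ (x + 1) ^ 2 * ((1 - 2 / (x + 1)) * q + r / (x + 1) ^ 2) := by gcongr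
    _ = (x ^ 2 - 1) * q + r := by field_simp; ring

theorem sq_mul_le_sum_Ico_of_rec {a b : ℕ → ℝ} (ha : ∀ t : ℕ, 1 ≤ t → 0 ≤ a t)
    (hrec : ∀ t : ℕ, 1 ≤ t →
      a (t + 1) ≤ (1 - 2 / ((t : ℝ) + 1)) * a t + b t / ((t : ℝ) + 1) ^ 2)
    {n : ℕ} (hn : 2 ≤ n) :
    (n : ℝ) ^ 2 * a n ≤ ∑ k ∈ Ico 1 n, b k := by
  have hstep (t : ℕ) (ht : 1 ≤ t) : ((t + 1 : ℕ) : ℝ) ^ 2 * a (t + 1) ≤ ((t : ℝ) ^ 2 - 1) * a t + b t := by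
    push_cast
    exact add_one_sq_mul_le_of_le (by positivity) (hrec t ht)
  have hbase : ((2 : ℕ) : ℝ) ^ 2 * a 2 ≤ b 1 := by simpa using hstep 1 le_rfl
  have htele : (n : ℝ) ^ 2 * a n ≤ ((2 : ℕ) : ℝ) ^ 2 * a 2 + ∑ k ∈ Ico 2 n, b k := by
    refine le_add_sum_Ico_of_le_add (s := fun t => (t : ℝ) ^ 2 * a t) (fun t ht => ?_) hn
    nlinarith [hstep t (by omega), ha t (by omega)]
  rw [sum_eq_sum_Ico_succ_bot (by omega)]
  linarith

theorem fw_recursion_lemma_general (a b : ℕ → ℝ)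
    (ha : ∀ t : ℕ, 1 ≤ t → 0 ≤ a t)
    (hrec : ∀ t : ℕ, 1 ≤ t →
      a (t + 1) ≤ (1 - 2 / ((t : ℝ) + 1)) * a t + b t / ((t : ℝ) + 1) ^ 2) :
    (∀ t : ℕ, 2 ≤ t → a t ≤ 1 / (t : ℝ) ^ 2 * ∑ k ∈ Finset.Icc 1 (t - 1), b k) ∧
    (∀ M : ℝ, 0 < M → (∀ t : ℕ, 1 ≤ t → b t ≤ M) →
      ∀ t : ℕ, 2 ≤ t → a t ≤ M / ((t : ℝ) + 1)) := by
  have hIcc (t : ℕ) (ht : 1 ≤ t) : Icc 1 (t - 1) = Ico 1 t := by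
    ext k; simp only [mem_Icc, mem_Ico]; omega
  have hmain (t : ℕ) (ht : 2 ≤ t) : a t ≤ 1 / (t : ℝ) ^ 2 * ∑ k ∈ Icc 1 (t - 1), b k := by
    rw [hIcc t (by omega), one_div_mul_eq_div, le_div_iff₀' (by positivity)]
    exact sq_mul_le_sum_Ico_of_rec ha hrec ht
  refine ⟨hmain, fun M hM hbM t ht => (hmain t ht).trans ?_⟩
  have ht' : (2 : ℝ) ≤ t := by exact_mod_cast ht
  have hsum : ∑ k ∈ Icc 1 (t - 1), b k ≤ ((t : ℝ) - 1) * M := by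
    calc ∑ k ∈ Icc 1 (t - 1), b k ≤ #(Icc 1 (t - 1)) • M :=
          sum_le_card_nsmul _ _ _ fun k hk => hbM k (mem_Icc.mp hk).1
      _ = ((t : ℝ) - 1) * M := by
          rw [Nat.card_Icc, Nat.add_sub_cancel, nsmul_eq_mul, Nat.cast_sub (by omega), Nat.cast_one]
  rw [one_div_mul_eq_div, div_le_div_iff₀ (by positivity) (by positivity)]
  nlinarith

/-- the recursion lemma (Lemma 3 of the paper). -/
theorem fw_recursion_lemma (a b : ℕ → ℝ)
    (ha : ∀ t : ℕ, 1 ≤ t → 0 ≤ a t) (hb : ∀ t : ℕ, 1 ≤ t → 0 ≤ b t)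
    (hrec : ∀ t : ℕ, 1 ≤ t →
      a (t + 1) ≤ (1 - 2 / ((t : ℝ) + 1)) * a t + b t / ((t : ℝ) + 1) ^ 2) :
    (∀ t : ℕ, 2 ≤ t → a t ≤ 1 / (t : ℝ) ^ 2 * ∑ k ∈ Finset.Icc 1 (t - 1), b k) ∧
    (∀ M : ℝ, 0 < M → (∀ t : ℕ, 1 ≤ t → b t ≤ M) →
      ∀ t : ℕ, 2 ≤ t → a t ≤ M / ((t : ℝ) + 1)) :=
  fw_recursion_lemma_general a b ha hrec
end
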